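/- Let π' be a permutation of {1,…,n} different from the identity, and let x ∈ ℝ^n have nondecreasing coordinates. Then there exists an elementary transposition τ (swapping two consecutive values) such that π := τ ∘ π' has strictly fewer inversions than π' and ‖x - x^π‖₂ ≤ ‖x - x^{π'}‖₂, where x^σ denotes the mirror of x under σ. -/

import Mathlib

/-!
Since `π' ≠ 1`, the value `k + 1` stands to the left of the value `k` in `π'` for some `k`.
Swapping these two values removes exactly this inversion and creates no new one, because no value
lies strictly between `k` and `k + 1`. As the mirror is an isometry,
`‖x - x^σ‖² = 2‖x‖² - 2⟪x, x^σ⟫`, and the swap raises `⟪x, x^σ⟫` by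
`(x_{k+1} - x_k) (x_{π'⁻¹ k} - x_{π'⁻¹ (k+1)}) ≥ 0`, a single step of the rearrangement inequality.
-/

/-- The mirror of `x` in the cell of the permutation `σ`, defined by `(x^σ)_{σ(i)} = x_i`. -/
noncomputable def mirror {n : ℕ} (x : EuclideanSpace ℝ (Fin n)) (σ : Equiv.Perm (Fin n)) :
    EuclideanSpace ℝ (Fin n) :=
  WithLp.toLp 2 fun i => x (σ.symm i)

/-- Number of inversions of a permutation: pairs `(i,j)` with `i < j` and `σ i > σ j`. -/
def invCount {n : ℕ} (σ : Equiv.Perm (Fin n)) : ℕ :=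
  (Finset.univ.filter fun p : Fin n × Fin n => p.1 < p.2 ∧ σ p.2 < σ p.1).card

open Equiv Finset

theorem Equiv.Perm.exists_apply_add_one_lt_apply_of_ne_one {n : ℕ} {ρ : Perm (Fin n)}
    (hρ : ρ ≠ 1) :
    ∃ (k : ℕ) (hk : k + 1 < n), ρ ⟨k + 1, hk⟩ < ρ ⟨k, Nat.lt_of_succ_lt hk⟩ := by
  contrapose! hρ
  obtain _ | m := n
  · exact Subsingleton.elim _ _
  have hmono : StrictMono ρ := Fin.strictMono_iff_lt_succ.2 fun i =>
    (hρ i (by omega)).lt_of_ne (ρ.injective.ne Fin.castSucc_lt_succ.ne)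
  exact Equiv.ext (congrFun hmono.eq_id)

section Inversions

variable {α : Type*} [LinearOrder α] {a b : α}

theorem CovBy.lt_or_eq_of_swap_apply_lt (hab : a ⋖ b) {u v : α} (h : swap a b u < swap a b v) :
    u < v ∨ u = b ∧ v = a := by
  have hle : ∀ c, c < b → c ≤ a := fun _ => hab.le_of_lt
  have hge : ∀ c, a < c → b ≤ c := fun _ => hab.ge_of_gt
  grind [hab.lt]

variable [Fintype α]

def Equiv.Perm.inversions (σ : Perm α) : Finset (α × α) :=
  univ.filter fun p => p.1 < p.2 ∧ σ p.2 < σ p.1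

theorem invCount_eq_card_inversions {n : ℕ} (σ : Perm (Fin n)) : invCount σ = #σ.inversions :=
  rfl

theorem Equiv.Perm.mem_inversions {σ : Perm α} {p : α × α} :
    p ∈ σ.inversions ↔ p.1 < p.2 ∧ σ p.2 < σ p.1 := by
  simp [inversions]

theorem Equiv.Perm.inversions_swap_mul_ssubset {σ : Perm α} (hab : a ⋖ b) (hσ : σ⁻¹ b < σ⁻¹ a) :
    (swap a b * σ).inversions ⊂ σ.inversions := by
  refine (ssubset_iff_of_subset fun p hp => ?_).2 ⟨(σ⁻¹ b, σ⁻¹ a), ?_, ?_⟩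
  · rw [mem_inversions] at hp ⊢
    refine ⟨hp.1, (hab.lt_or_eq_of_swap_apply_lt hp.2).resolve_right ?_⟩
    rintro ⟨h2, h1⟩
    rw [← σ.eq_inv_iff_eq] at h1 h2
    exact hp.1.not_gt (h1 ▸ h2 ▸ hσ)
  · simpa [mem_inversions] using ⟨hσ, hab.lt⟩
  · simp [mem_inversions, hab.lt.le]

end Inversions

section Mirror

variable {n : ℕ} (x : EuclideanSpace ℝ (Fin n)) (σ : Perm (Fin n))

@[simp]
theorem mirror_apply (i : Fin n) : mirror x σ i = x (σ⁻¹ i) :=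
  rfl

@[simp]
theorem norm_mirror : ‖mirror x σ‖ = ‖x‖ := by
  simp only [EuclideanSpace.norm_eq, mirror_apply]
  rw [Equiv.sum_comp σ⁻¹ fun i => ‖x i‖ ^ 2]

theorem inner_mirror_swap_mul_sub_inner_mirror (a b : Fin n) :
    inner ℝ x (mirror x (swap a b * σ)) - inner ℝ x (mirror x σ)
      = (x b - x a) * (x (σ⁻¹ a) - x (σ⁻¹ b)) := by
  obtain rfl | hab := eq_or_ne a b
  · simp [← Perm.one_def]
  have hreindex : ∑ i, x (σ⁻¹ (swap a b i)) * x i = ∑ i, x (σ⁻¹ i) * x (swap a b i) := by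
    simpa using Equiv.sum_comp (swap a b) fun i => x (σ⁻¹ i) * x (swap a b i)
  simp only [PiLp.inner_apply, mirror_apply, mul_inv_rev, swap_inv, Perm.mul_apply,
    RCLike.inner_apply, conj_trivial, hreindex, ← sum_sub_distrib, ← mul_sub]
  rw [Fintype.sum_eq_add a b hab fun i hi => by simp [swap_apply_of_ne_of_ne hi.1 hi.2]]
  simp only [swap_apply_left, swap_apply_right]
  ring

theorem norm_sub_mirror_swap_mul_le (hx : Monotone fun i => x i) {a b : Fin n} (hab : a ≤ b)
    (hσ : σ⁻¹ b ≤ σ⁻¹ a) : ‖x - mirror x (swap a b * σ)‖ ≤ ‖x - mirror x σ‖ := by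
  have hgain := inner_mirror_swap_mul_sub_inner_mirror x σ a b
  have hgain_nonneg : 0 ≤ (x b - x a) * (x (σ⁻¹ a) - x (σ⁻¹ b)) :=
    mul_nonneg (sub_nonneg.2 (hx hab)) (sub_nonneg.2 (hx hσ))
  rw [← sq_le_sq₀ (norm_nonneg _) (norm_nonneg _), norm_sub_sq_real, norm_sub_sq_real,
    norm_mirror, norm_mirror]
  linarith

end Mirror

theorem stmt6 {n : ℕ} (x : EuclideanSpace ℝ (Fin n)) (hx : Monotone fun i => x i)
    (π' : Equiv.Perm (Fin n)) (hπ' : π' ≠ 1) :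
    ∃ (k : ℕ) (hk : k + 1 < n),
      invCount (Equiv.swap (⟨k, Nat.lt_of_succ_lt hk⟩ : Fin n) (⟨k + 1, hk⟩ : Fin n) * π')
          < invCount π' ∧
        ‖x - mirror x (Equiv.swap (⟨k, Nat.lt_of_succ_lt hk⟩ : Fin n) (⟨k + 1, hk⟩ : Fin n) * π')‖
          ≤ ‖x - mirror x π'‖ := by
  obtain ⟨k, hk, hdescent⟩ := Perm.exists_apply_add_one_lt_apply_of_ne_one (inv_ne_one.2 hπ')
  have hcov : (⟨k, Nat.lt_of_succ_lt hk⟩ : Fin n) ⋖ ⟨k + 1, hk⟩ := by simp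
  refine ⟨k, hk, ?_, norm_sub_mirror_swap_mul_le x π' hx hcov.le hdescent.le⟩
  rw [invCount_eq_card_inversions, invCount_eq_card_inversions]
  exact card_lt_card (π'.inversions_swap_mul_ssubset hcov hdescent)
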